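/- Let q ≥ 2 be a real number, m ≥ 1 an integer, and for λ ∈ [0,1] set f(λ) = q^{λm/2} + q^{−λm/2} + (1 − q^{−1}) ∑_{k=1}^{m−1} q^{(k − m/2)λ}. Then: (Upper bound) for every λ ∈ (0,1), f(λ) ≤ f(0)^{1−λ} f(1)^{λ}. (Lower bound) for every ε > 0, every λ ∈ (0,1): f(λ) / ( f(0)^{1−λ+ε} · f(1)^{λ−ε} ) ≥ q^{εm/2} · ((1 + q^{−1})/(m+1))^{1−λ+ε} · (1 + q^{−1})^{−1}. -/

import Mathlib

/-!
Write `f(λ) = ∑_{k=0}^{m} w_k (q^{k - m/2})^λ` with weights `w_0 = w_m = 1` and `w_k = 1 - q⁻¹`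
otherwise. A nonnegative combination of exponentials in `λ` is log-convex, which is the weighted
Hölder inequality with exponent `1/λ`; this gives the upper bound. For the lower bound only crude
information is needed: `f(λ) ≥ q^{λm/2}` (the top term), `f(0) = ∑ w_k ≤ m + 1`, and the exact value
`f(1) = (1 + q⁻¹) q^{m/2}` (the inner sum telescopes); with these the constant comes out exactly.
-/

open Real

/-- The function computing the elementary spherical function of `GL₂` at a
nonarchimedean place: `f(λ) = q^{λm/2} + q^{-λm/2} + (1-q⁻¹) ∑_{k=1}^{m-1} q^{(k-m/2)λ}`. -/
noncomputable def fsph (q : ℝ) (m : ℕ) (lam : ℝ) : ℝ :=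
  q ^ (lam * m / 2) + q ^ (-(lam * m / 2)) +
    (1 - q⁻¹) * ∑ k ∈ Finset.Icc 1 (m - 1), q ^ (((k : ℝ) - (m : ℝ) / 2) * lam)

open Finset

theorem Finset.sum_Icc_one_eq_sum_range {M : Type*} [AddCommMonoid M] (f : ℕ → M) (n : ℕ) :
    ∑ k ∈ Icc 1 n, f k = ∑ k ∈ range n, f (k + 1) := by
  rw [range_eq_Ico, sum_Ico_add' f 0 n 1]
  rfl

theorem Real.sum_mul_rpow_le_sum_rpow_mul_sum_mul_rpow {ι : Type*} (s : Finset ι) (w a : ι → ℝ)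
    (hw : ∀ i, 0 ≤ w i) (ha : ∀ i, 0 ≤ a i) {t : ℝ} (ht₀ : 0 < t) (ht₁ : t ≤ 1) :
    ∑ i ∈ s, w i * a i ^ t ≤ (∑ i ∈ s, w i) ^ (1 - t) * (∑ i ∈ s, w i * a i) ^ t := by
  have key := inner_le_weight_mul_Lp_of_nonneg s (one_le_inv₀ ht₀ |>.2 ht₁) w (a · ^ t) hw
    fun i ↦ rpow_nonneg (ha i) t
  simpa only [inv_inv, ← rpow_mul (ha _), mul_inv_cancel₀ ht₀.ne', rpow_one] using key

section fsph

variable {q : ℝ} {m : ℕ}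

noncomputable def fsphWeight (q : ℝ) (m k : ℕ) : ℝ := if k = 0 ∨ k = m then 1 else 1 - q⁻¹

lemma fsphWeight_nonneg (hq : 1 ≤ q) (k : ℕ) : 0 ≤ fsphWeight q m k := by
  have : q⁻¹ ≤ 1 := inv_le_one_of_one_le₀ hq
  unfold fsphWeight; split_ifs <;> linarith

lemma fsphWeight_le_one (hq : 0 ≤ q) (k : ℕ) : fsphWeight q m k ≤ 1 := by
  have : 0 ≤ q⁻¹ := inv_nonneg.2 hq
  unfold fsphWeight; split_ifs <;> linarith

lemma fsph_eq_sum_fsphWeight_mul_rpow (hq : 0 ≤ q) (hm : 1 ≤ m) (lam : ℝ) :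
    fsph q m lam = ∑ k ∈ range (m + 1), fsphWeight q m k * (q ^ ((k : ℝ) - m / 2)) ^ lam := by
  obtain ⟨n, rfl⟩ := Nat.exists_eq_add_of_le' hm
  have hmid : ∀ k ∈ range n, fsphWeight q (n + 1) (k + 1) = 1 - q⁻¹ := fun k hk ↦
    if_neg (by simp at hk; omega)
  have hend : fsphWeight q (n + 1) 0 = 1 ∧ fsphWeight q (n + 1) (n + 1) = 1 :=
    ⟨if_pos (.inl rfl), if_pos (.inr rfl)⟩
  simp_rw [← rpow_mul hq]
  rw [sum_range_succ, sum_range_succ', sum_congr rfl fun k hk ↦ by rw [hmid k hk], ← mul_sum,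
    fsph, Nat.add_sub_cancel, sum_Icc_one_eq_sum_range, hend.1, hend.2]
  push_cast
  ring_nf

lemma rpow_le_fsph (hq : 1 ≤ q) (lam : ℝ) : q ^ (lam * m / 2) ≤ fsph q m lam := by
  have h0 : 0 ≤ q := by linarith
  have h1 : 0 ≤ 1 - q⁻¹ := sub_nonneg.2 (inv_le_one_of_one_le₀ hq)
  have h2 := rpow_nonneg h0 (-(lam * m / 2))
  have h3 : 0 ≤ ∑ k ∈ Icc 1 (m - 1), q ^ (((k : ℝ) - m / 2) * lam) :=
    sum_nonneg fun k _ ↦ rpow_nonneg h0 _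
  unfold fsph
  nlinarith

lemma fsph_pos (hq : 1 ≤ q) (lam : ℝ) : 0 < fsph q m lam :=
  (rpow_pos_of_pos (by linarith) _).trans_le (rpow_le_fsph hq lam)

lemma fsph_zero_le (hq : 0 ≤ q) (hm : 1 ≤ m) : fsph q m 0 ≤ m + 1 := by
  simp only [fsph_eq_sum_fsphWeight_mul_rpow hq hm, rpow_zero, mul_one]
  calc ∑ k ∈ range (m + 1), fsphWeight q m k ≤ ∑ k ∈ range (m + 1), (1 : ℝ) :=
        sum_le_sum fun k _ ↦ fsphWeight_le_one hq k
    _ = m + 1 := by simp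

lemma fsph_one (hq : 0 < q) (hm : 1 ≤ m) : fsph q m 1 = (1 + q⁻¹) * q ^ ((m : ℝ) / 2) := by
  obtain ⟨n, rfl⟩ := Nat.exists_eq_add_of_le' hm
  have hgeom : (1 - q⁻¹) * ∑ k ∈ Icc 1 n, q ^ k = q ^ n - 1 := by
    rw [← geom_sum_mul, sum_Icc_one_eq_sum_range]
    simp_rw [pow_succ, ← sum_mul]
    field_simp
  have hsum : ∑ k ∈ Icc 1 n, q ^ (((k : ℝ) - ((n + 1 : ℕ) : ℝ) / 2) * 1) =
      (∑ k ∈ Icc 1 n, q ^ k) * q ^ (-(((n + 1 : ℕ) : ℝ) / 2)) := by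
    rw [sum_mul]
    refine sum_congr rfl fun k _ ↦ ?_
    rw [mul_one, sub_eq_add_neg, rpow_add hq, rpow_natCast]
  have hhalf : q ^ (((n + 1 : ℕ) : ℝ) / 2) * q ^ (((n + 1 : ℕ) : ℝ) / 2) = q ^ (n + 1) := by
    rw [← rpow_add hq, add_halves, rpow_natCast]
  rw [fsph, Nat.add_sub_cancel, hsum, ← mul_assoc, hgeom, one_mul, rpow_neg hq.le]
  field_simp
  linear_combination -hhalf

lemma fsph_le_fsph_zero_rpow_mul_fsph_one_rpow (hq : 1 ≤ q) (hm : 1 ≤ m) {lam : ℝ}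
    (h₀ : 0 < lam) (h₁ : lam ≤ 1) :
    fsph q m lam ≤ fsph q m 0 ^ (1 - lam) * fsph q m 1 ^ lam := by
  have hq₀ : 0 ≤ q := by linarith
  simp only [fsph_eq_sum_fsphWeight_mul_rpow hq₀ hm, rpow_zero, rpow_one, mul_one]
  exact sum_mul_rpow_le_sum_rpow_mul_sum_mul_rpow _ _ _ (fsphWeight_nonneg hq)
    (fun k ↦ rpow_nonneg hq₀ _) h₀ h₁

lemma rpow_mul_rpow_le_fsph_div (hq : 1 ≤ q) (hm : 1 ≤ m) {ε lam : ℝ} (h : lam ≤ 1 + ε) :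
    q ^ (ε * m / 2) * ((1 + q⁻¹) / (m + 1)) ^ (1 - lam + ε) * (1 + q⁻¹)⁻¹
      ≤ fsph q m lam / (fsph q m 0 ^ (1 - lam + ε) * fsph q m 1 ^ (lam - ε)) := by
  have hq₀ : 0 < q := by linarith
  have hM : (0 : ℝ) < m + 1 := by positivity
  have hs : 0 ≤ 1 - lam + ε := by linarith
  have hpow_q : q ^ (ε * m / 2) * q ^ ((m : ℝ) / 2 * (lam - ε)) = q ^ (lam * m / 2) := by
    rw [← rpow_add hq₀]; ring_nf
  have hf₀ := fsph_pos (m := m) hq 0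
  rw [fsph_one hq₀ hm]
  set a := 1 + q⁻¹
  have ha : 0 < a := by positivity
  have hpow_a : a ^ (1 - lam + ε) * a ^ (lam - ε) = a := by
    rw [← rpow_add ha]; ring_nf; exact rpow_one a
  calc q ^ (ε * m / 2) * (a / (m + 1)) ^ (1 - lam + ε) * a⁻¹
      = q ^ (lam * m / 2) / ((m + 1) ^ (1 - lam + ε) * (a * q ^ ((m : ℝ) / 2)) ^ (lam - ε)) := by
        rw [mul_rpow ha.le (rpow_nonneg hq₀.le _), div_rpow ha.le hM.le, ← rpow_mul hq₀.le,
          ← hpow_q]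
        field_simp
        linear_combination hpow_a
    _ ≤ fsph q m lam / (fsph q m 0 ^ (1 - lam + ε) * (a * q ^ ((m : ℝ) / 2)) ^ (lam - ε)) :=
        div_le_div₀ (fsph_pos hq lam).le (rpow_le_fsph hq lam) (by positivity) <|
          mul_le_mul_of_nonneg_right (rpow_le_rpow hf₀.le (fsph_zero_le hq₀.le hm) hs)
            (by positivity)

end fsph

theorem stmt12 (q : ℝ) (hq : 2 ≤ q) (m : ℕ) (hm : 1 ≤ m) :
    (∀ lam : ℝ, 0 < lam → lam < 1 →
        fsph q m lam ≤ fsph q m 0 ^ (1 - lam) * fsph q m 1 ^ lam) ∧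
    (∀ ε : ℝ, 0 < ε → ∀ lam : ℝ, 0 < lam → lam < 1 →
        q ^ (ε * m / 2) * ((1 + q⁻¹) / (m + 1)) ^ (1 - lam + ε) * (1 + q⁻¹)⁻¹
          ≤ fsph q m lam / (fsph q m 0 ^ (1 - lam + ε) * fsph q m 1 ^ (lam - ε))) := by
  have hq₁ : 1 ≤ q := by linarith
  exact ⟨fun lam h₀ h₁ ↦ fsph_le_fsph_zero_rpow_mul_fsph_one_rpow hq₁ hm h₀ h₁.le,
    fun ε hε lam _ h₁ ↦ rpow_mul_rpow_le_fsph_div hq₁ hm (by linarith)⟩
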